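/- arXiv:1610.08673 — 2 statements merged into one kernel-verified Lean document; each statement's English description precedes it below -/
import Mathlib

section
/- For M ≥ 1 the one-dimensional generating function χ_{2M}(y) = ((−1)^{M−1}/(2^{2M−1}√π (M−1)!)) · H_{2M−1}(y) e^{−y²}/y admits the representation χ_{2M}(y) = (1/√π) Σ_{ℓ=0}^{M−1} ((−1)^ℓ/(ℓ! 4^ℓ)) d^{2ℓ}/dy^{2ℓ} e^{−y²}. -/
/-!
Rodrigues' formula `(d/dy)^k e^{-y²} = (-1)^k H_k(y) e^{-y²}` reduces the claim to the polynomial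
identity `(-1)^n H_{2n+1}(y) = 2 ⋅ 4^n n! y ∑_{ℓ ≤ n} (-1)^ℓ H_{2ℓ}(y) / (ℓ! 4^ℓ)`, which follows
by induction on `n` from the three-term recurrence `H_{k+2} = 2y H_{k+1} - 2(k+1) H_k`.
-/

/-- Physicists' Hermite polynomials, via `H_0 = 1`, `H_{k+1}(x) = 2x H_k(x) - H_k'(x)`. -/
noncomputable def hermitePoly : ℕ → Polynomial ℤ
  | 0 => 1
  | k + 1 => 2 * Polynomial.X * hermitePoly k - Polynomial.derivative (hermitePoly k)

/-- The one-dimensional generating function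
`χ_{2M}(y) = ((-1)^{M-1}/(2^{2M-1} √π (M-1)!)) H_{2M-1}(y) e^{-y²} / y`. -/
noncomputable def chiFun (M : ℕ) (y : ℝ) : ℝ :=
  ((-1) ^ (M - 1) / (2 ^ (2 * M - 1) * Real.sqrt Real.pi * (Nat.factorial (M - 1)))) *
    Polynomial.aeval y (hermitePoly (2 * M - 1)) * Real.exp (-y ^ 2) / y

open Polynomial Finset
open scoped Nat

lemma hermitePoly_succ (n : ℕ) :
    hermitePoly (n + 1) = 2 * X * hermitePoly n - derivative (hermitePoly n) := rfl

lemma derivative_hermitePoly_succ (n : ℕ) :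
    derivative (hermitePoly (n + 1)) = 2 * (n + 1) * hermitePoly n := by
  induction n with
  | zero => simp [hermitePoly]
  | succ n ih =>
    rw [hermitePoly_succ (n + 1), derivative_sub, derivative_mul, ih, hermitePoly_succ n]
    simp only [derivative_mul, derivative_ofNat, derivative_X, derivative_add, derivative_natCast,
      derivative_one]
    push_cast
    ring

lemma hermitePoly_add_two (n : ℕ) :
    hermitePoly (n + 2) = 2 * X * hermitePoly (n + 1) - 2 * ((n : ℤ[X]) + 1) * hermitePoly n := by
  rw [hermitePoly_succ (n + 1), derivative_hermitePoly_succ]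

lemma iteratedDeriv_exp_neg_sq (n : ℕ) :
    iteratedDeriv n (fun s : ℝ => Real.exp (-s ^ 2)) =
      fun y => (-1) ^ n * aeval y (hermitePoly n) * Real.exp (-y ^ 2) := by
  induction n with
  | zero => funext y; simp [hermitePoly]
  | succ n ih =>
    funext y
    have hexp : HasDerivAt (fun s : ℝ => Real.exp (-s ^ 2)) (Real.exp (-y ^ 2) * -(2 * y)) y := by
      simpa using ((hasDerivAt_pow 2 y).neg).exp
    have hderiv : HasDerivAt (fun s => (-1) ^ n * aeval s (hermitePoly n) * Real.exp (-s ^ 2))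
        ((-1) ^ n * aeval y (derivative (hermitePoly n)) * Real.exp (-y ^ 2) +
          (-1) ^ n * aeval y (hermitePoly n) * (Real.exp (-y ^ 2) * -(2 * y))) y :=
      (((hermitePoly n).hasDerivAt_aeval y).const_mul _).mul hexp
    rw [iteratedDeriv_succ, ih, hderiv.deriv, hermitePoly_succ]
    simp only [map_sub, map_mul, aeval_X, map_ofNat]
    ring

lemma neg_one_pow_mul_aeval_hermitePoly_odd {K : Type*} [Field K] [CharZero K] (n : ℕ) (y : K) :
    (-1) ^ n * aeval y (hermitePoly (2 * n + 1)) =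
      2 * 4 ^ n * n ! * y *
        ∑ ℓ ∈ range (n + 1), (-1) ^ ℓ / (ℓ ! * 4 ^ ℓ) * aeval y (hermitePoly (2 * ℓ)) := by
  induction n with
  | zero => simp [hermitePoly, map_ofNat]
  | succ n ih =>
    have hrec : aeval y (hermitePoly (2 * (n + 1) + 1)) =
        2 * y * aeval y (hermitePoly (2 * (n + 1))) -
          4 * (n + 1) * aeval y (hermitePoly (2 * n + 1)) := by
      rw [show 2 * (n + 1) + 1 = 2 * n + 1 + 2 by ring, show 2 * (n + 1) = 2 * n + 1 + 1 by ring,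
        hermitePoly_add_two]
      simp only [map_sub, map_mul, aeval_X, map_ofNat, map_add, map_natCast, map_one]
      push_cast
      ring
    have hfac : ((n + 1)! : K) ≠ 0 := Nat.cast_ne_zero.mpr (Nat.factorial_ne_zero _)
    have hlast : 2 * 4 ^ (n + 1) * ((n + 1)! : K) * y *
        ((-1) ^ (n + 1) / ((n + 1)! * 4 ^ (n + 1)) * aeval y (hermitePoly (2 * (n + 1)))) =
          2 * y * (-1) ^ (n + 1) * aeval y (hermitePoly (2 * (n + 1))) := by
      field_simp
    have hfac_succ : ((n + 1)! : K) = (n + 1) * n ! := by push_cast [Nat.factorial_succ]; ring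
    rw [sum_range_succ, hrec]
    linear_combination (4 * ((n : K) + 1)) * ih - hlast - 2 * 4 ^ (n + 1) * y *
      (∑ ℓ ∈ range (n + 1), (-1) ^ ℓ / (ℓ ! * 4 ^ ℓ) * aeval y (hermitePoly (2 * ℓ))) * hfac_succ

/-- `χ_{2M}(y) = (1/√π) ∑_{ℓ=0}^{M-1} ((-1)^ℓ/(ℓ! 4^ℓ)) (d/dy)^{2ℓ} e^{-y²}`. -/
theorem stmt6 (M : ℕ) (hM : 1 ≤ M) (y : ℝ) (hy : y ≠ 0) :
    chiFun M y =
      (1 / Real.sqrt Real.pi) *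
        ∑ ℓ ∈ Finset.range M,
          ((-1) ^ ℓ / ((Nat.factorial ℓ : ℝ) * 4 ^ ℓ)) *
            iteratedDeriv (2 * ℓ) (fun s : ℝ => Real.exp (-s ^ 2)) y := by
  obtain ⟨n, rfl⟩ := Nat.exists_eq_add_of_le' hM
  have hpow : (2 : ℝ) ^ (2 * (n + 1) - 1) = 2 * 4 ^ n := by
    rw [show 2 * (n + 1) - 1 = 2 * n + 1 by omega, pow_succ, pow_mul]; norm_num; ring
  have hsqrt : Real.sqrt Real.pi ≠ 0 := Real.sqrt_ne_zero'.mpr Real.pi_pos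
  have hfac : (n ! : ℝ) ≠ 0 := Nat.cast_ne_zero.mpr (Nat.factorial_ne_zero _)
  have hodd := neg_one_pow_mul_aeval_hermitePoly_odd n y
  rw [chiFun, hpow, Nat.add_sub_cancel, show 2 * (n + 1) - 1 = 2 * n + 1 by omega]
  simp only [iteratedDeriv_exp_neg_sq, pow_mul, neg_one_sq, one_pow, one_mul, ← mul_assoc,
    ← sum_mul]
  -- keeps `field_simp` from clearing the denominators inside the summands
  generalize ∑ ℓ ∈ range (n + 1), (-1) ^ ℓ / (ℓ ! * 4 ^ ℓ) * aeval y (hermitePoly (2 * ℓ)) = S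
    at hodd ⊢
  field_simp
  linear_combination hodd
end

section
/- The function χ_{2M}(y) = ((−1)^{M−1}/(2^{2M−1}√π (M−1)!)) H_{2M−1}(y) e^{−y²}/y satisfies the moment conditions ∫_ℝ χ_{2M}(y) dy = 1 and ∫_ℝ y^k χ_{2M}(y) dy = 0 for 1 ≤ k ≤ 2M−1. -/
/-!
Write `L p = ∫ p(y) e^{-y²} dy` for real polynomials `p`. Integration by parts gives
`L p' = L (2X p)`, so the recursion `H_{n+1} = 2X H_n - H_n'` yields `L (q H_{n+1}) = L (q' H_n)`,
hence `L (q H_n) = L (q^{(n)})`, which vanishes when `deg q < n`. Since `y^{j+1} χ_{2M}(y)` is a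
multiple of `y^j H_{2M-1}(y) e^{-y²}`, the moments `1 ≤ k ≤ 2M-1` vanish.

For the zeroth moment, `D_m = H_{2m+1} / X` is a polynomial: `H'_{n+1} = 2(n+1) H_n` gives
`D_{m+1} = 2 H_{2m+2} - 4(m+1) D_m`, and as `L H_{2m+2} = 0` we get `L D_m = (-4)^m m! · 2√π`,
the reciprocal of the normalising constant of `χ_{2M}`.
-/

open MeasureTheory

open Polynomial Real

noncomputable def hermiteReal (n : ℕ) : ℝ[X] := (hermitePoly n).map (Int.castRingHom ℝ)

lemma eval_hermiteReal (n : ℕ) (y : ℝ) : (hermiteReal n).eval y = aeval y (hermitePoly n) := by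
  rw [hermiteReal, eval_map, aeval_def]
  rfl

lemma hermiteReal_zero : hermiteReal 0 = 1 := by
  simp [hermiteReal, hermitePoly]

lemma hermiteReal_succ (n : ℕ) :
    hermiteReal (n + 1) = 2 * X * hermiteReal n - derivative (hermiteReal n) := by
  simp [hermiteReal, hermitePoly, derivative_map]

lemma derivative_hermiteReal_succ (n : ℕ) :
    derivative (hermiteReal (n + 1)) = (2 * (n + 1) : ℝ[X]) * hermiteReal n := by
  induction n with
  | zero => simp [hermiteReal_succ, hermiteReal_zero]
  | succ n ih =>
    rw [hermiteReal_succ (n + 1), derivative_sub, derivative_mul, ih, hermiteReal_succ n]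
    simp only [derivative_mul, derivative_ofNat, derivative_X, derivative_add, derivative_natCast,
      derivative_one]
    push_cast
    ring

noncomputable def hermiteDivX : ℕ → ℝ[X]
  | 0 => 2
  | m + 1 => 2 * hermiteReal (2 * m + 2) - (4 * (m + 1) : ℝ[X]) * hermiteDivX m

lemma X_mul_hermiteDivX (m : ℕ) : X * hermiteDivX m = hermiteReal (2 * m + 1) := by
  induction m with
  | zero =>
    rw [hermiteDivX, hermiteReal_succ, hermiteReal_zero, derivative_one]
    ring
  | succ m ih =>
    rw [hermiteDivX, show 2 * (m + 1) + 1 = 2 * m + 1 + 1 + 1 by ring,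
      hermiteReal_succ (2 * m + 1 + 1), derivative_hermiteReal_succ, ← ih]
    push_cast
    ring

lemma integrable_eval_mul_exp_neg_sq (p : ℝ[X]) :
    Integrable fun y : ℝ => p.eval y * exp (-y ^ 2) := by
  induction p using Polynomial.induction_on' with
  | add p q hp hq => simpa [add_mul] using hp.fun_add hq
  | monomial n a =>
    have h := integrable_rpow_mul_exp_neg_mul_sq one_pos (s := n)
      (by linarith [n.cast_nonneg (α := ℝ)])
    simpa [mul_assoc] using h.const_mul a

noncomputable def gaussIntegral : ℝ[X] →ₗ[ℝ] ℝ where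
  toFun p := ∫ y : ℝ, p.eval y * exp (-y ^ 2)
  map_add' p q := by
    simp only [eval_add, add_mul]
    exact integral_add (integrable_eval_mul_exp_neg_sq p) (integrable_eval_mul_exp_neg_sq q)
  map_smul' a p := by
    simp only [eval_smul, smul_eq_mul, mul_assoc, RingHom.id_apply]
    exact integral_const_mul a _

lemma gaussIntegral_apply (p : ℝ[X]) :
    gaussIntegral p = ∫ y : ℝ, p.eval y * exp (-y ^ 2) := rfl

lemma gaussIntegral_C_mul (a : ℝ) (p : ℝ[X]) :
    gaussIntegral (C a * p) = a * gaussIntegral p := by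
  rw [C_mul', map_smul, smul_eq_mul]

lemma gaussIntegral_derivative (p : ℝ[X]) :
    gaussIntegral (derivative p) = gaussIntegral (2 * X * p) := by
  have hderiv (y : ℝ) : HasDerivAt (fun y => p.eval y * exp (-y ^ 2))
      ((derivative p - 2 * X * p).eval y * exp (-y ^ 2)) y := by
    refine ((p.hasDerivAt y).fun_mul (hasDerivAt_pow 2 y).fun_neg.exp).congr_deriv ?_
    simp only [eval_sub, eval_mul, eval_ofNat, eval_X]
    ring
  have := integral_eq_zero_of_hasDerivAt_of_integrable hderiv
    (integrable_eval_mul_exp_neg_sq _) (integrable_eval_mul_exp_neg_sq p)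
  rw [← gaussIntegral_apply, map_sub] at this
  linarith

lemma gaussIntegral_mul_hermiteReal_succ (q : ℝ[X]) (n : ℕ) :
    gaussIntegral (q * hermiteReal (n + 1)) = gaussIntegral (derivative q * hermiteReal n) := by
  have h := gaussIntegral_derivative (q * hermiteReal n)
  rw [derivative_mul, map_add] at h
  rw [hermiteReal_succ, mul_sub, map_sub,
    show q * (2 * X * hermiteReal n) = 2 * X * (q * hermiteReal n) by ring]
  linarith

lemma gaussIntegral_mul_hermiteReal (q : ℝ[X]) (n : ℕ) :
    gaussIntegral (q * hermiteReal n) = gaussIntegral (derivative^[n] q) := by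
  induction n generalizing q with
  | zero => rw [hermiteReal_zero, mul_one, Function.iterate_zero_apply]
  | succ n ih => rw [gaussIntegral_mul_hermiteReal_succ, ih, Function.iterate_succ_apply]

lemma gaussIntegral_mul_hermiteReal_of_natDegree_lt {q : ℝ[X]} {n : ℕ} (h : q.natDegree < n) :
    gaussIntegral (q * hermiteReal n) = 0 := by
  rw [gaussIntegral_mul_hermiteReal, iterate_derivative_eq_zero h, map_zero]

lemma gaussIntegral_hermiteDivX (m : ℕ) :
    gaussIntegral (hermiteDivX m) = (-4) ^ m * m.factorial * (2 * √π) := by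
  induction m with
  | zero =>
    simpa [hermiteDivX, gaussIntegral_apply, integral_const_mul] using integral_gaussian 1
  | succ m ih =>
    have h2 : gaussIntegral (2 * hermiteReal (2 * m + 2)) = 0 :=
      gaussIntegral_mul_hermiteReal_of_natDegree_lt (by simp)
    rw [hermiteDivX, map_sub, h2, show (4 * (m + 1) : ℝ[X]) = C (4 * (m + 1 : ℝ)) by
      rw [map_mul, map_add, map_natCast, map_one, map_ofNat],
      gaussIntegral_C_mul, ih, Nat.factorial_succ]
    push_cast
    ring

noncomputable def chiCoeff (m : ℕ) : ℝ := (-1) ^ m / (2 ^ (2 * m + 1) * √π * m.factorial)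

lemma chiFun_succ_of_ne_zero (m : ℕ) {y : ℝ} (hy : y ≠ 0) :
    chiFun (m + 1) y = chiCoeff m * ((hermiteDivX m).eval y * exp (-y ^ 2)) := by
  rw [chiFun, chiCoeff, show 2 * (m + 1) - 1 = 2 * m + 1 by omega, Nat.add_sub_cancel,
    ← eval_hermiteReal, ← X_mul_hermiteDivX, eval_mul, eval_X]
  field_simp

lemma integral_chiFun_succ (m : ℕ) : ∫ y : ℝ, chiFun (m + 1) y = 1 := by
  have hae : (fun y => chiFun (m + 1) y) =ᵐ[volume]
      fun y => chiCoeff m * ((hermiteDivX m).eval y * exp (-y ^ 2)) := by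
    filter_upwards [compl_mem_ae_iff.mpr (measure_singleton (0 : ℝ))] with y hy
    exact chiFun_succ_of_ne_zero m hy
  rw [integral_congr_ae hae, integral_const_mul, ← gaussIntegral_apply, gaussIntegral_hermiteDivX]
  have h4 : (-1 : ℝ) ^ m * (-4) ^ m = 2 ^ (2 * m) := by
    rw [← mul_pow, pow_mul]
    norm_num
  rw [chiCoeff, div_mul_eq_mul_div, div_eq_one_iff_eq (by positivity), pow_succ]
  linear_combination (2 * √π * m.factorial) * h4

lemma integral_pow_mul_chiFun_succ {m j : ℕ} (hj : j ≤ 2 * m) :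
    ∫ y : ℝ, y ^ (j + 1) * chiFun (m + 1) y = 0 := by
  have h (y : ℝ) : y ^ (j + 1) * chiFun (m + 1) y =
      chiCoeff m * ((X ^ j * hermiteReal (2 * m + 1)).eval y * exp (-y ^ 2)) := by
    rw [← X_mul_hermiteDivX, ← mul_assoc (X ^ j), ← pow_succ]
    rcases eq_or_ne y 0 with rfl | hy
    · simp [chiFun]
    · rw [chiFun_succ_of_ne_zero m hy, eval_mul, eval_pow, eval_X]
      ring
  simp_rw [h, integral_const_mul, ← gaussIntegral_apply,
    gaussIntegral_mul_hermiteReal_of_natDegree_lt (q := X ^ j) (n := 2 * m + 1)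
      (by rw [natDegree_X_pow]; omega), mul_zero]

/-- `χ_{2M}` satisfies the moment conditions
`∫ χ_{2M} = 1` and `∫ y^k χ_{2M}(y) dy = 0` for `1 ≤ k ≤ 2M-1`. -/
theorem stmt7 (M : ℕ) (hM : 1 ≤ M) :
    (∫ y : ℝ, chiFun M y) = 1 ∧
      ∀ k : ℕ, 1 ≤ k → k ≤ 2 * M - 1 → (∫ y : ℝ, y ^ k * chiFun M y) = 0 := by
  obtain ⟨m, rfl⟩ : ∃ m, M = m + 1 := ⟨M - 1, by omega⟩
  refine ⟨integral_chiFun_succ m, fun k hk₁ hk₂ => ?_⟩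
  obtain ⟨j, rfl⟩ : ∃ j, k = j + 1 := ⟨k - 1, by omega⟩
  exact integral_pow_mul_chiFun_succ (by omega)
end
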